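/- arXiv:1006.0701 — 3 statements merged into one kernel-verified Lean document; each statement's English description precedes it below -/
import Mathlib

section
/- For every function f : {0,1}^n × {0,1}^n → {0,1}^m and every α ≤ m ≤ 2n, there exist random variables X and Y taking values in {0,1}^n such that H∞(X) ≥ n − α, H∞(Y) ≥ n − α, H∞(X,Y) ≥ 2n − α, and H∞(f(X,Y)) ≤ m − α. -/
/-- For every `f : {0,1}^n × {0,1}^n → {0,1}^m` and every `α ≤ m ≤ 2n`, there
exist random variables `X, Y` on `{0,1}^n` (given by their joint probability mass function `p`)
with `H∞(X) ≥ n − α`, `H∞(Y) ≥ n − α`, `H∞(X,Y) ≥ 2n − α`, and `H∞(f(X,Y)) ≤ m − α`.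
Min-entropy bounds are expressed equivalently via pointwise probability bounds:
`H∞(X) ≥ t ↔ ∀ a, P[X = a] ≤ 2^(−t)` and `H∞(Z) ≤ t ↔ ∃ z, P[Z = z] ≥ 2^(−t)`. -/
theorem stmt_3 (n m α : ℕ) (hαm : α ≤ m) (hm : m ≤ 2 * n)
    (f : (Fin n → Bool) × (Fin n → Bool) → (Fin m → Bool)) :
    ∃ p : (Fin n → Bool) × (Fin n → Bool) → ℝ,
      (∀ a, 0 ≤ p a) ∧ (∑ a, p a = 1) ∧
      (∀ x : Fin n → Bool, ∑ y : Fin n → Bool, p (x, y) ≤ (2 : ℝ) ^ ((α : ℤ) - n)) ∧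
      (∀ y : Fin n → Bool, ∑ x : Fin n → Bool, p (x, y) ≤ (2 : ℝ) ^ ((α : ℤ) - n)) ∧
      (∀ a, p a ≤ (2 : ℝ) ^ ((α : ℤ) - 2 * n)) ∧
      (∃ z : Fin m → Bool,
        (2 : ℝ) ^ ((α : ℤ) - m) ≤ ∑ a, (if f a = z then p a else 0)) := by
  classical
  -- pigeonhole: some fiber has at least 2^(2n-m) elements
  obtain ⟨z, hz⟩ : ∃ z : Fin m → Bool,
      2 ^ (2 * n - m) ≤ (Finset.univ.filter (fun a => f a = z)).card := by
    by_contra h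
    push_neg at h
    have hsum : (Finset.univ : Finset ((Fin n → Bool) × (Fin n → Bool))).card
        = ∑ z : Fin m → Bool, (Finset.univ.filter (fun a => f a = z)).card :=
      Finset.card_eq_sum_card_fiberwise (by simp)
    have hcardU : (Finset.univ : Finset ((Fin n → Bool) × (Fin n → Bool))).card = 2 ^ (2 * n) := by
      simp [Finset.card_univ, two_mul, pow_add]
    have hle : ∑ z : Fin m → Bool, (Finset.univ.filter (fun a => f a = z)).card
        ≤ ∑ _z : Fin m → Bool, (2 ^ (2 * n - m) - 1) :=
      Finset.sum_le_sum (fun z _ => by have := h z; omega)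
    have hcardZ : (Finset.univ : Finset (Fin m → Bool)).card = 2 ^ m := by
      simp [Finset.card_univ]
    rw [Finset.sum_const, hcardZ, smul_eq_mul] at hle
    rw [hcardU] at hsum
    have h2 : 2 ^ m * 2 ^ (2 * n - m) = 2 ^ (2 * n) := by
      rw [← pow_add]; congr 1; omega
    have h3 : 2 ^ m * (2 ^ (2 * n - m) - 1) = 2 ^ (2 * n) - 2 ^ m := by
      rw [Nat.mul_sub, mul_one, h2]
    rw [h3] at hle
    have h4 : (1:ℕ) ≤ 2 ^ m := Nat.one_le_two_pow
    have h5 := le_trans hsum.le hle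
    exact absurd h5 (not_le.mpr (Nat.sub_lt (by positivity) h4))
  set N : ℕ := (Finset.univ.filter (fun a => f a = z)).card with hN
  have hN1 : 1 ≤ N := le_trans Nat.one_le_two_pow hz
  have hNU : N ≤ 2 ^ (2 * n) := by
    calc N ≤ (Finset.univ : Finset ((Fin n → Bool) × (Fin n → Bool))).card :=
          Finset.card_filter_le _ _
      _ = 2 ^ (2 * n) := by simp [Finset.card_univ, two_mul, pow_add]
  have hNpos : (0:ℝ) < N := by exact_mod_cast hN1
  have hNz : (2:ℝ) ^ ((2 * n : ℤ) - m) ≤ N := by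
    have : ((2:ℝ) ^ (2 * n - m : ℕ) : ℝ) ≤ N := by exact_mod_cast hz
    rwa [show ((2 * n : ℤ) - m) = ((2 * n - m : ℕ) : ℤ) by omega, zpow_natCast]
  set c : ℝ := min ((2:ℝ) ^ ((α : ℤ) - 2 * n)) (1 / N) with hc
  set q : ℝ := (1 - N * c) / ((2:ℝ) ^ (2 * n) - N) with hq
  have hcpos : 0 ≤ c := le_min (by positivity) (by positivity)
  have hNc1 : N * c ≤ 1 := by
    calc (N:ℝ) * c ≤ N * (1 / N) := by
          apply mul_le_mul_of_nonneg_left (min_le_right _ _) hNpos.le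
      _ = 1 := by field_simp
  have hsubnn : (0:ℝ) ≤ (2:ℝ) ^ (2 * n) - N := by
    have : (N:ℝ) ≤ (2:ℝ) ^ (2*n) := by exact_mod_cast hNU
    linarith
  have hqnn : 0 ≤ q := div_nonneg (by linarith) hsubnn
  -- key: when N = 2^(2n), c = 1/N
  have hkey : ((2:ℝ) ^ (2 * n) - N) * q = 1 - N * c := by
    rcases eq_or_lt_of_le hsubnn with he | hlt
    · have hNeq : (N:ℝ) = (2:ℝ) ^ (2 * n) := by linarith
      have hle2 : (1 / (N:ℝ)) ≤ (2:ℝ) ^ ((α : ℤ) - 2 * n) := by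
        rw [hNeq, show (1 / ((2:ℝ) ^ (2*n)) : ℝ) = (2:ℝ) ^ (-(2*(n:ℤ))) by
          rw [zpow_neg, one_div, show (2*(n:ℤ)) = ((2*n:ℕ):ℤ) by push_cast; ring, zpow_natCast]]
        apply zpow_le_zpow_right₀ (by norm_num)
        omega
      have hceq : c = 1 / N := min_eq_right hle2
      have hNc : (N:ℝ) * c = 1 := by rw [hceq]; field_simp
      rw [← he, zero_mul, hNc, sub_self]
    · rw [hq]
      field_simp
  have hcbound : c ≤ (2:ℝ) ^ ((α : ℤ) - 2 * n) := min_le_left _ _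
  have hqbound : q ≤ (2:ℝ) ^ ((α : ℤ) - 2 * n) := by
    rcases eq_or_lt_of_le hsubnn with he | hlt
    · have : q = 0 := by
        rw [hq, ← he, div_zero]
      rw [this]; positivity
    · rw [hq, div_le_iff₀ hlt]
      rcases le_total (1 / (N:ℝ)) ((2:ℝ) ^ ((α : ℤ) - 2 * n)) with h1 | h1
      · have hceq : c = 1 / N := min_eq_right h1
        rw [hceq]
        have : (N:ℝ) * (1 / N) = 1 := by field_simp
        rw [this]
        simp only [sub_self]
        positivity
      · have hceq : c = (2:ℝ) ^ ((α : ℤ) - 2 * n) := min_eq_left h1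
        rw [hceq]
        have h2a : (1:ℝ) ≤ (2:ℝ) ^ (α:ℤ) := one_le_zpow₀ (by norm_num) (by positivity)
        have hpow : ((2:ℝ) ^ (2*n)) * (2:ℝ) ^ ((α : ℤ) - 2 * n) = (2:ℝ) ^ (α:ℤ) := by
          rw [← zpow_natCast (2:ℝ) (2*n), ← zpow_add₀ (by norm_num : (2:ℝ) ≠ 0)]
          congr 1
          push_cast
          ring
        have hexp : ((2:ℝ)^(2*n) - (N:ℝ)) * (2:ℝ)^((α:ℤ)-2*n)
            = (2:ℝ)^(α:ℤ) - N * (2:ℝ)^((α:ℤ)-2*n) := by rw [sub_mul, hpow]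
        linarith [hexp, h2a]
  refine ⟨fun a => if f a = z then c else q, ?_, ?_, ?_, ?_, ?_, ?_⟩
  · intro a; dsimp only; split <;> [exact hcpos; exact hqnn]
  · rw [Finset.sum_ite, Finset.sum_const, Finset.sum_const]
    have hMN : (Finset.univ.filter (fun a => ¬ f a = z)).card = 2 ^ (2*n) - N := by
      have := Finset.card_filter_add_card_filter_not
        (s := (Finset.univ : Finset ((Fin n → Bool) × (Fin n → Bool)))) (p := fun a => f a = z)
      have hcardU : (Finset.univ : Finset ((Fin n → Bool) × (Fin n → Bool))).card = 2 ^ (2 * n) := by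
        simp [Finset.card_univ, two_mul, pow_add]
      omega
    rw [hMN, nsmul_eq_mul, nsmul_eq_mul]
    have hcast : ((2 ^ (2*n) - N : ℕ) : ℝ) = (2:ℝ) ^ (2*n) - N := by
      push_cast [hNU]; ring
    rw [hcast, hkey]
    ring
  · intro x
    calc ∑ y : Fin n → Bool, (if f (x, y) = z then c else q)
        ≤ ∑ _y : Fin n → Bool, (2:ℝ) ^ ((α : ℤ) - 2 * n) :=
          Finset.sum_le_sum (fun y _ => by split <;> [exact hcbound; exact hqbound])
      _ = (2:ℝ) ^ ((α : ℤ) - n) := by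
          rw [Finset.sum_const, Finset.card_univ, nsmul_eq_mul]
          simp only [Fintype.card_fun, Fintype.card_bool, Fintype.card_fin]
          push_cast
          rw [← zpow_natCast (2:ℝ) n, ← zpow_add₀ (by norm_num : (2:ℝ) ≠ 0)]
          congr 1; ring
  · intro y
    calc ∑ x : Fin n → Bool, (if f (x, y) = z then c else q)
        ≤ ∑ _x : Fin n → Bool, (2:ℝ) ^ ((α : ℤ) - 2 * n) :=
          Finset.sum_le_sum (fun x _ => by split <;> [exact hcbound; exact hqbound])
      _ = (2:ℝ) ^ ((α : ℤ) - n) := by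
          rw [Finset.sum_const, Finset.card_univ, nsmul_eq_mul]
          simp only [Fintype.card_fun, Fintype.card_bool, Fintype.card_fin]
          push_cast
          rw [← zpow_natCast (2:ℝ) n, ← zpow_add₀ (by norm_num : (2:ℝ) ≠ 0)]
          congr 1; ring
  · intro a; dsimp only; split <;> [exact hcbound; exact hqbound]
  · refine ⟨z, ?_⟩
    have hsimp : ∑ a, (if f a = z then (if f a = z then c else q) else 0)
        = ∑ a, (if f a = z then c else 0) := by
      apply Finset.sum_congr rfl
      intro a _
      split <;> simp_all
    rw [hsimp, ← Finset.sum_filter, Finset.sum_const, nsmul_eq_mul, ← hN]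
    rcases le_total (1 / (N:ℝ)) ((2:ℝ) ^ ((α : ℤ) - 2 * n)) with h1 | h1
    · have : (N:ℝ) * (1 / N) = 1 := by field_simp
      rw [hc, min_eq_right h1, this]
      apply zpow_le_one_of_nonpos₀ (by norm_num)
      omega
    · rw [hc, min_eq_left h1]
      calc (2:ℝ) ^ ((α : ℤ) - m) = (2:ℝ) ^ ((2*n:ℤ) - m) * (2:ℝ) ^ ((α : ℤ) - 2 * n) := by
            rw [← zpow_add₀ (by norm_num : (2:ℝ) ≠ 0)]; congr 1; push_cast; ring
        _ ≤ N * (2:ℝ) ^ ((α : ℤ) - 2 * n) :=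
            mul_le_mul_of_nonneg_right hNz (by positivity)
end

section
/- If S ≥ 12D + 3(1 + ln D)·M·m² + 6D·ln(N/S), then there exists a table T : [N] × [N] → [M] that is (S,D)-rainbow balanced. -/
/-- The family `𝒜_D`: sets of colors `A ⊆ [M]` with `M/D ≤ |A| ≤ (M/D)·m²`. -/
def InAD (M D m : ℕ) (A : Finset (Fin M)) : Prop :=
  (M : ℝ) / D ≤ (A.card : ℝ) ∧ (A.card : ℝ) ≤ (M : ℝ) / D * m ^ 2

/-- Number of cells `(u, v) ∈ B₁ × B₂` properly colored with respect to columns: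
`T(u,v) ∈ A_v`. -/
def properCountCols {N M : ℕ} (T : Fin N × Fin N → Fin M)
    (B₁ B₂ : Finset (Fin N)) (A : Fin N → Finset (Fin M)) : ℕ :=
  ((B₁ ×ˢ B₂).filter (fun c => T c ∈ A c.2)).card

/-- Number of cells `(u, v) ∈ B₁ × B₂` properly colored with respect to rows:
`T(u,v) ∈ A_u`. -/
def properCountRows {N M : ℕ} (T : Fin N × Fin N → Fin M)
    (B₁ B₂ : Finset (Fin N)) (A : Fin N → Finset (Fin M)) : ℕ :=
  ((B₁ ×ˢ B₂).filter (fun c => T c ∈ A c.1)).card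

/-- A table `T : [N] × [N] → [M]` is `(S,D)`-rainbow balanced. -/
def RainbowBalanced (N M S D m : ℕ) (T : Fin N × Fin N → Fin M) : Prop :=
  (∀ B₁ B₂ : Finset (Fin N), (∃ k : ℕ, 0 < k ∧ B₁.card = k * S) → B₂.card = S →
    ∀ A : Fin N → Finset (Fin M), (∀ v ∈ B₂, InAD M D m (A v)) →
      (properCountCols T B₁ B₂ A : ℝ) ≤ 2 * m ^ 2 * B₁.card * B₂.card / D) ∧
  (∀ B₁ B₂ : Finset (Fin N), B₁.card = S → (∃ k : ℕ, 0 < k ∧ B₂.card = k * S) →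
    ∀ A : Fin N → Finset (Fin M), (∀ u ∈ B₁, InAD M D m (A u)) →
      (properCountRows T B₁ B₂ A : ℝ) ≤ 2 * m ^ 2 * B₁.card * B₂.card / D)

/-!
Count tables. Fix `B₁`, `B₂` and color sets with `|A_v| ≤ (M/D)·m²`, and let `X` be the number of
cells of `B₁ × B₂` hit by a uniformly random table. Then `E[2^X] ≤ exp(m²|B₁||B₂|/D)`, so
`X > 2m²|B₁||B₂|/D` for at most a fraction `exp(-(2 ln 2 - 1)·m²|B₁||B₂|/D)` of the tables.
A union bound over `|B₁| = kS`, `|B₂| = S` and the at most `exp((M/D)·m²·(1 + ln D))` choices of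
each `A_v` (an `n`-set has at most `(en/x)^x` subsets of size `≤ x`) leaves, by the hypothesis on
`S`, a fraction at most `2^-(k+3)` for each `k`. Hence fewer than half of all tables violate
condition (a). Condition (b) for `T` is condition (a) for the transpose of `T`, so some table
satisfies both.
-/

open Finset Real

theorem card_filter_card_le_le_exp {ι : Type*} [Fintype ι] {x : ℝ} (hx : 0 < x)
    (hxn : x ≤ Fintype.card ι) :
    (#{s : Finset ι | (#s : ℝ) ≤ x} : ℝ) ≤ exp (x * (1 + log (Fintype.card ι / x))) := by
  set n : ℝ := (Fintype.card ι : ℝ)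
  have hn : 0 < n := hx.trans_le hxn
  set q : ℝ := x / n
  have hq : 0 < q := div_pos hx hn
  have hq1 : q ≤ 1 := (div_le_one hn).2 hxn
  have hsum : #{s : Finset ι | (#s : ℝ) ≤ x} * q ^ x ≤ exp x :=
    calc #{s : Finset ι | (#s : ℝ) ≤ x} * q ^ x
        = ∑ _s ∈ {s : Finset ι | (#s : ℝ) ≤ x}, q ^ x := by rw [sum_const, nsmul_eq_mul]
      _ ≤ ∑ s ∈ {s : Finset ι | (#s : ℝ) ≤ x}, q ^ #s := by
          refine sum_le_sum fun s hs => ?_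
          rw [← rpow_natCast]
          exact rpow_le_rpow_of_exponent_ge hq hq1 (mem_filter.1 hs).2
      _ ≤ ∑ s : Finset ι, q ^ #s * 1 ^ (Fintype.card ι - #s) := by
          simp only [one_pow, mul_one]
          exact sum_le_sum_of_subset_of_nonneg (subset_univ _) fun _ _ _ => by positivity
      _ = (q + 1) ^ Fintype.card ι := Fintype.sum_pow_mul_eq_add_pow ι q 1
      _ ≤ exp q ^ Fintype.card ι := by
          gcongr
          linarith [add_one_le_exp q]
      _ = exp x := by
          rw [← exp_nat_mul, mul_div_cancel₀ x hn.ne']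
  rw [rpow_def_of_pos hq] at hsum
  have hexp : x * (1 + log (n / x)) = x - log q * x := by
    rw [← inv_div, log_inv]; ring
  rwa [hexp, exp_sub, le_div_iff₀ (exp_pos _)]

theorem choose_le_exp {N S j : ℕ} (hS : 0 < S) (hSj : S ≤ j) (hjN : j ≤ N) :
    (N.choose j : ℝ) ≤ exp (j * (1 + log (N / S))) := by
  have hSr : (0 : ℝ) < S := by exact_mod_cast hS
  have hSjr : (S : ℝ) ≤ j := by exact_mod_cast hSj
  have hjNr : (j : ℝ) ≤ N := by exact_mod_cast hjN
  have hsub : powersetCard j (univ : Finset (Fin N))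
      ⊆ ({s | (#s : ℝ) ≤ j} : Finset (Finset (Fin N))) := fun s hs => by
    simp [(mem_powersetCard.1 hs).2]
  calc (N.choose j : ℝ) = #(powersetCard j (univ : Finset (Fin N))) := by simp
    _ ≤ #({s | (#s : ℝ) ≤ j} : Finset (Finset (Fin N))) := by exact_mod_cast card_le_card hsub
    _ ≤ exp (j * (1 + log (N / j))) := by
        simpa using
          card_filter_card_le_le_exp (ι := Fin N) (hSr.trans_le hSjr) (by simpa using hjNr)
    _ ≤ exp (j * (1 + log (N / S))) := by
        have hN : (0 : ℝ) < N := by linarith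
        gcongr
        exact div_pos hN (by linarith)

section Chernoff

variable {α β : Type*} [Fintype α] [DecidableEq α] [Fintype β] [DecidableEq β]

omit [Fintype β] in
theorem two_pow_card_filter_eq_prod (C : Finset α) (A : α → Finset β) (f : α → β) :
    (2 : ℝ) ^ #{a ∈ C | f a ∈ A a} = ∏ a, if a ∈ C then (if f a ∈ A a then 2 else 1) else 1 := by
  rw [prod_ite_mem, univ_inter, ← prod_filter, prod_const]

omit [Fintype α] [DecidableEq α] in
theorem sum_ite_mem_two_one (A : Finset β) :
    ∑ x : β, (if x ∈ A then (2 : ℝ) else 1) = Fintype.card β + #A := by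
  have h : ∀ x, (if x ∈ A then (2 : ℝ) else 1) = 1 + if x ∈ A then 1 else 0 := fun x => by
    split_ifs <;> norm_num
  simp only [h, sum_add_distrib, sum_const, card_univ, nsmul_eq_mul, mul_one, sum_boole,
    filter_mem_eq_inter, univ_inter]

theorem sum_two_pow_card_filter_le (C : Finset α) (A : α → Finset β) {p : ℝ}
    (hA : ∀ a ∈ C, ((A a).card : ℝ) ≤ p * Fintype.card β) :
    ∑ f : α → β, (2 : ℝ) ^ #{a ∈ C | f a ∈ A a}
      ≤ Fintype.card (α → β) * exp (p * #C) := by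
  have hcol : ∀ a, ∑ x : β, (if a ∈ C then (if x ∈ A a then (2 : ℝ) else 1) else 1)
      ≤ Fintype.card β * exp (if a ∈ C then p else 0) := by
    intro a
    by_cases ha : a ∈ C
    · simp only [ha, if_true, sum_ite_mem_two_one]
      nlinarith [hA a ha, add_one_le_exp p, (Nat.cast_nonneg (Fintype.card β) : (0:ℝ) ≤ _)]
    · simp [ha]
  calc ∑ f : α → β, (2 : ℝ) ^ #{a ∈ C | f a ∈ A a}
      = ∏ a, ∑ x : β, (if a ∈ C then (if x ∈ A a then (2 : ℝ) else 1) else 1) := by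
        simp only [two_pow_card_filter_eq_prod]
        exact (Fintype.prod_sum
          fun a x => if a ∈ C then (if x ∈ A a then (2 : ℝ) else 1) else 1).symm
    _ ≤ ∏ a, (Fintype.card β * exp (if a ∈ C then p else 0) : ℝ) :=
        prod_le_prod (fun a _ => sum_nonneg fun x _ => by split_ifs <;> norm_num)
          fun a _ => hcol a
    _ = Fintype.card (α → β) * exp (p * #C) := by
        rw [prod_mul_distrib, ← exp_sum, sum_ite_mem, univ_inter, sum_const, nsmul_eq_mul,
          prod_const, card_univ, Fintype.card_fun, mul_comm p]
        push_cast; rfl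

theorem card_filter_le_card_filter_le_exp (C : Finset α) (A : α → Finset β) {p : ℝ}
    (hA : ∀ a ∈ C, ((A a).card : ℝ) ≤ p * Fintype.card β) (t : ℝ) :
    (#{f : α → β | t ≤ #{a ∈ C | f a ∈ A a}} : ℝ)
      ≤ Fintype.card (α → β) * exp (p * #C - t * log 2) := by
  set bad := ({f : α → β | t ≤ #{a ∈ C | f a ∈ A a}} : Finset (α → β))
  have hmarkov : #bad * exp (t * log 2) ≤ ∑ f : α → β, (2 : ℝ) ^ #{a ∈ C | f a ∈ A a} := by
    calc #bad * exp (t * log 2) = ∑ _f ∈ bad, exp (t * log 2) := by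
          rw [sum_const, nsmul_eq_mul]
      _ ≤ ∑ f ∈ bad, (2 : ℝ) ^ #{a ∈ C | f a ∈ A a} := by
          refine sum_le_sum fun f hf => ?_
          rw [← exp_log (two_pos : (0:ℝ) < 2), ← exp_nat_mul, exp_log two_pos]
          exact exp_le_exp.2
            (mul_le_mul_of_nonneg_right (mem_filter.1 hf).2 (log_nonneg one_le_two))
      _ ≤ _ := sum_le_sum_of_subset_of_nonneg (subset_univ _) fun _ _ _ => by positivity
  rw [sub_eq_add_neg, exp_add, exp_neg, ← mul_assoc, ← div_eq_mul_inv, le_div_iff₀ (exp_pos _)]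
  exact hmarkov.trans (sum_two_pow_card_filter_le C A hA)

end Chernoff

theorem union_bound_exponent_le {k S D σ Λ μ : ℝ} (hk : 1 ≤ k) (hμ : 1 ≤ μ) (hσ : 0 ≤ σ)
    (hΛ : 0 ≤ Λ) (hD : 1 ≤ D) (h : D * (12 + 3 * Λ + 6 * σ) ≤ S) :
    k * S * (1 + σ) + S * (1 + σ) + S * Λ + (k + 3) * log 2
      ≤ (2 * log 2 - 1) * μ * (k * S) * S / D := by
  have hlog2 := log_two_gt_d9
  have hlog2' := log_two_lt_d9
  have hSD : 12 + 3 * Λ + 6 * σ ≤ S / D := by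
    rw [le_div_iff₀ (by linarith)]; linarith
  have hS : 12 ≤ S := by nlinarith
  have hkS : S ≤ k * S := le_mul_of_one_le_left (by linarith) hk
  have hcμ : 0.386 ≤ (2 * log 2 - 1) * μ := by nlinarith
  calc k * S * (1 + σ) + S * (1 + σ) + S * Λ + (k + 3) * log 2
      ≤ 0.386 * (k * S) * (12 + 3 * Λ + 6 * σ) := by
        nlinarith [mul_le_mul_of_nonneg_right hkS (by linarith : 0 ≤ 1 + σ),
          mul_le_mul_of_nonneg_right hkS hΛ, mul_le_mul_of_nonneg_left hS (by linarith : 0 ≤ k)]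
    _ ≤ (2 * log 2 - 1) * μ * (k * S) * (S / D) := by gcongr
    _ = (2 * log 2 - 1) * μ * (k * S) * S / D := by ring

theorem exists_and_apply_of_two_mul_card_lt {Ω : Type*} [Fintype Ω] {f : Ω → Ω}
    (hf : Function.Involutive f) (P : Ω → Prop) [DecidablePred P]
    (h : 2 * #{x | ¬ P x} < Fintype.card Ω) : ∃ x, P x ∧ P (f x) := by
  classical
  by_contra! hne
  have hcover : (univ : Finset Ω) ⊆ ({x | ¬ P x} : Finset Ω) ∪ ({x | ¬ P (f x)} : Finset Ω) :=
    fun x _ => by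
      by_cases hx : P x <;> simp [hx, hne]
  have hswap : #({x | ¬ P (f x)} : Finset Ω) = #{x | ¬ P x} :=
    card_equiv (hf.toPerm f) fun x => by simp
  have := (card_le_card hcover).trans (card_union_le _ _)
  rw [card_univ, hswap] at this
  omega

def ColBalanced (N M S D m : ℕ) (T : Fin N × Fin N → Fin M) : Prop :=
  ∀ B₁ B₂ : Finset (Fin N), (∃ k : ℕ, 0 < k ∧ B₁.card = k * S) → B₂.card = S →
    ∀ A : Fin N → Finset (Fin M), (∀ v ∈ B₂, InAD M D m (A v)) →
      (properCountCols T B₁ B₂ A : ℝ) ≤ 2 * m ^ 2 * B₁.card * B₂.card / D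

section Balanced

variable {N M S D m : ℕ}

theorem properCountRows_eq_properCountCols_swap (T : Fin N × Fin N → Fin M)
    (B₁ B₂ : Finset (Fin N)) (A : Fin N → Finset (Fin M)) :
    properCountRows T B₁ B₂ A = properCountCols (T ∘ Prod.swap) B₂ B₁ A :=
  card_equiv (Equiv.prodComm _ _) fun c => by simp [and_comm]

theorem rainbowBalanced_iff (T : Fin N × Fin N → Fin M) :
    RainbowBalanced N M S D m T ↔
      ColBalanced N M S D m T ∧ ColBalanced N M S D m (T ∘ Prod.swap) := by
  refine and_congr Iff.rfl ⟨fun h B₁ B₂ hB₁ hB₂ A hA => ?_, fun h B₁ B₂ hB₁ hB₂ A hA => ?_⟩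
  · have := h B₂ B₁ hB₂ hB₁ A hA
    rwa [properCountRows_eq_properCountCols_swap, mul_right_comm] at this
  · rw [properCountRows_eq_properCountCols_swap, mul_right_comm]
    exact h B₂ B₁ hB₂ hB₁ A hA

theorem colBalanced_of_lt (hNS : N < S) (T : Fin N × Fin N → Fin M) :
    ColBalanced N M S D m T := fun _ B₂ _ hB₂ _ _ => by
  have := B₂.card_le_univ
  simp only [Fintype.card_fin] at this
  omega

theorem colBalanced_of_le (hD : 0 < D) (hDm : D ≤ 2 * m ^ 2) (T : Fin N × Fin N → Fin M) :
    ColBalanced N M S D m T := fun B₁ B₂ _ _ A _ => by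
  have hcount : (properCountCols T B₁ B₂ A : ℝ) ≤ #B₁ * #B₂ := by
    exact_mod_cast (card_filter_le _ _).trans (card_product B₁ B₂).le
  rw [le_div_iff₀ (by exact_mod_cast hD)]
  have hDr : (D : ℝ) ≤ 2 * m ^ 2 := by exact_mod_cast hDm
  nlinarith [mul_le_mul_of_nonneg_left hDr (by positivity : (0 : ℝ) ≤ #B₁ * #B₂)]

theorem colBalanced_zero (hM : 0 < M) (hS : 0 < S) (hD : 0 < D) (T : Fin N × Fin N → Fin M) :
    ColBalanced N M S D 0 T := fun _ B₂ _ hB₂ A hA => by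
  obtain ⟨v, hv⟩ := card_pos.1 (hB₂ ▸ hS)
  have ⟨hlow, hup⟩ := hA v hv
  have : (0 : ℝ) < M / D := by positivity
  rw [Nat.cast_zero, zero_pow two_ne_zero, mul_zero] at hup
  linarith

end Balanced

section UnionBound

variable {N M S D m : ℕ}

-- Only the upper size bound of `𝒜_D` enters the union bound.
noncomputable def smallColorSets (M D m : ℕ) : Finset (Finset (Fin M)) :=
  {A | (#A : ℝ) ≤ M / D * m ^ 2}

noncomputable def colorFamilies (M D m : ℕ) (B : Finset (Fin N)) :
    Finset (Fin N → Finset (Fin M)) :=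
  Fintype.piFinset fun v => if v ∈ B then smallColorSets M D m else {∅}

theorem card_colorFamilies (B : Finset (Fin N)) :
    #(colorFamilies M D m B) = #(smallColorSets M D m) ^ #B := by
  rw [colorFamilies, Fintype.card_piFinset]
  simp only [apply_ite card, card_singleton]
  rw [prod_ite_mem, univ_inter, prod_const]

theorem properCountCols_congr (T : Fin N × Fin N → Fin M) (B₁ B₂ : Finset (Fin N))
    {A A' : Fin N → Finset (Fin M)} (h : ∀ v ∈ B₂, A v = A' v) :
    properCountCols T B₁ B₂ A = properCountCols T B₁ B₂ A' := by
  unfold properCountCols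
  congr 1
  exact filter_congr fun c hc => by rw [h c.2 (mem_product.1 hc).2]

theorem card_not_properCountCols_le (B₁ B₂ : Finset (Fin N)) (A : Fin N → Finset (Fin M))
    (hA : ∀ v ∈ B₂, A v ∈ smallColorSets M D m) :
    (#{T : Fin N × Fin N → Fin M |
        ¬ (properCountCols T B₁ B₂ A : ℝ) ≤ 2 * m ^ 2 * #B₁ * #B₂ / D} : ℝ)
      ≤ Fintype.card (Fin N × Fin N → Fin M)
          * exp (-((2 * log 2 - 1) * m ^ 2 * #B₁ * #B₂ / D)) := by
  have hsub : ({T | ¬ (properCountCols T B₁ B₂ A : ℝ) ≤ 2 * m ^ 2 * #B₁ * #B₂ / D} :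
        Finset (Fin N × Fin N → Fin M))
      ⊆ ({T | 2 * m ^ 2 * #B₁ * #B₂ / D ≤ (#{c ∈ B₁ ×ˢ B₂ | T c ∈ A c.2} : ℝ)} :
          Finset (Fin N × Fin N → Fin M)) :=
    monotone_filter_right _ fun _ _ hT => (not_le.1 hT).le
  have hp : ∀ c ∈ B₁ ×ˢ B₂, (#(A c.2) : ℝ) ≤ m ^ 2 / D * Fintype.card (Fin M) := fun c hc => by
    rw [Fintype.card_fin, div_mul_comm]
    exact (mem_filter.1 (hA c.2 (mem_product.1 hc).2)).2
  refine (Nat.cast_le.2 (card_le_card hsub)).trans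
    ((card_filter_le_card_filter_le_exp _ _ hp _).trans_eq ?_)
  rw [card_product]
  push_cast
  ring_nf

theorem mem_smallColorSets_of_mem_colorFamilies {B : Finset (Fin N)}
    {A : Fin N → Finset (Fin M)} (hA : A ∈ colorFamilies M D m B) :
    ∀ v ∈ B, A v ∈ smallColorSets M D m := fun v hv => by
  simpa [hv] using Fintype.mem_piFinset.1 hA v

theorem ite_mem_colorFamilies {B : Finset (Fin N)} {A : Fin N → Finset (Fin M)}
    (hA : ∀ v ∈ B, InAD M D m (A v)) :
    (fun v => if v ∈ B then A v else ∅) ∈ colorFamilies M D m B := by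
  refine Fintype.mem_piFinset.2 fun v => ?_
  by_cases hv : v ∈ B
  · simpa [hv, smallColorSets] using (hA v hv).2
  · simp [hv]

open Classical in
theorem card_not_colBalanced_le (hS : 0 < S) :
    (#{T : Fin N × Fin N → Fin M | ¬ ColBalanced N M S D m T} : ℝ)
      ≤ Fintype.card (Fin N × Fin N → Fin M) * ∑ k ∈ Icc 1 (N / S),
          (N.choose (k * S) * N.choose S * #(smallColorSets M D m) ^ S
            * exp (-((2 * log 2 - 1) * m ^ 2 * (k * S) * S / D)) : ℝ) := by
  set bad : Finset (Fin N) → Finset (Fin N) → (Fin N → Finset (Fin M)) →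
      Finset (Fin N × Fin N → Fin M) := fun B₁ B₂ A =>
    {T | ¬ (properCountCols T B₁ B₂ A : ℝ) ≤ 2 * m ^ 2 * #B₁ * #B₂ / D}
  have hsub : ({T | ¬ ColBalanced N M S D m T} : Finset (Fin N × Fin N → Fin M))
      ⊆ (Icc 1 (N / S)).biUnion fun k => (powersetCard (k * S) univ).biUnion fun B₁ =>
          (powersetCard S univ).biUnion fun B₂ =>
            (colorFamilies M D m B₂).biUnion fun A => bad B₁ B₂ A := by
    intro T hT
    simp only [ColBalanced, mem_filter, mem_univ, true_and, not_forall] at hT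
    obtain ⟨B₁, B₂, ⟨k, hk, hB₁⟩, hB₂, A, hA, hbad⟩ := hT
    have hkS : k * S ≤ N := hB₁ ▸ (card_le_univ B₁).trans_eq (Fintype.card_fin N)
    simp only [mem_biUnion, mem_Icc, mem_powersetCard, subset_univ, true_and]
    refine ⟨k, ⟨hk, (Nat.le_div_iff_mul_le hS).2 hkS⟩, B₁, hB₁, B₂, hB₂, _,
      ite_mem_colorFamilies hA, mem_filter.2 ⟨mem_univ _, ?_⟩⟩
    rwa [properCountCols_congr T B₁ B₂ fun v hv => if_pos hv]
  calc (#{T : Fin N × Fin N → Fin M | ¬ ColBalanced N M S D m T} : ℝ)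
      ≤ ∑ k ∈ Icc 1 (N / S), ∑ B₁ ∈ powersetCard (k * S) univ, ∑ B₂ ∈ powersetCard S univ,
          ∑ A ∈ colorFamilies M D m B₂, (#(bad B₁ B₂ A) : ℝ) := by
        exact_mod_cast (card_le_card hsub).trans <| card_biUnion_le.trans <| sum_le_sum
          fun k _ => card_biUnion_le.trans <| sum_le_sum fun B₁ _ => card_biUnion_le.trans <|
            sum_le_sum fun B₂ _ => card_biUnion_le
    _ ≤ ∑ k ∈ Icc 1 (N / S), ∑ B₁ ∈ powersetCard (k * S) univ, ∑ B₂ ∈ powersetCard S univ,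
          ∑ A ∈ colorFamilies M D m B₂, (Fintype.card (Fin N × Fin N → Fin M)
            * exp (-((2 * log 2 - 1) * m ^ 2 * (k * S) * S / D)) : ℝ) := by
        gcongr with k _ B₁ hB₁ B₂ hB₂ A hA
        simpa [bad, (mem_powersetCard.1 hB₁).2, (mem_powersetCard.1 hB₂).2] using
          card_not_properCountCols_le B₁ B₂ A (mem_smallColorSets_of_mem_colorFamilies hA)
    _ = _ := by
        rw [mul_sum]
        refine sum_congr rfl fun k _ => ?_
        simp only [sum_const, card_colorFamilies]
        rw [sum_congr rfl fun B₂ hB₂ => by rw [(mem_powersetCard.1 hB₂).2]]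
        simp only [sum_const, card_powersetCard, card_univ, Fintype.card_fin, nsmul_eq_mul]
        push_cast
        ring

theorem card_smallColorSets_le (hM : 0 < M) (hm : 1 ≤ m) (hmD : m ^ 2 ≤ D) :
    (#(smallColorSets M D m) : ℝ) ≤ exp (M / D * m ^ 2 * (1 + log D)) := by
  have hm1 : (1 : ℝ) ≤ m ^ 2 := one_le_pow₀ (by exact_mod_cast hm)
  have hmDr : (m : ℝ) ^ 2 ≤ D := by exact_mod_cast hmD
  have hD : (0 : ℝ) < D := by linarith
  have hx : (0 : ℝ) < M / D * m ^ 2 := by positivity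
  have hxM : (M : ℝ) / D * m ^ 2 ≤ M := by
    rw [div_mul_eq_mul_div, div_le_iff₀ hD]
    exact mul_le_mul_of_nonneg_left hmDr (by positivity)
  have hlog : log (M / (M / D * m ^ 2)) ≤ log D := by
    rw [div_mul_eq_mul_div, div_div_eq_mul_div, mul_div_mul_left _ _ (by positivity)]
    exact log_le_log (by positivity) (div_le_self hD.le hm1)
  calc (#(smallColorSets M D m) : ℝ)
      ≤ exp (M / D * m ^ 2 * (1 + log (M / (M / D * m ^ 2)))) := by
        simpa [smallColorSets] using
          card_filter_card_le_le_exp (ι := Fin M) hx (by simpa using hxM)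
    _ ≤ exp (M / D * m ^ 2 * (1 + log D)) := by gcongr

theorem choose_mul_choose_mul_pow_mul_exp_le {k : ℕ} (hS : 0 < S) (hk : 1 ≤ k)
    (hkS : k * S ≤ N) (hM : 0 < M) (hm : 1 ≤ m) (hmD : m ^ 2 ≤ D)
    (h : 12 * (D : ℝ) + 3 * (1 + log D) * M * m ^ 2 + 6 * D * log (N / S) ≤ S) :
    (N.choose (k * S) * N.choose S * #(smallColorSets M D m) ^ S
      * exp (-((2 * log 2 - 1) * m ^ 2 * (k * S) * S / D)) : ℝ) ≤ (1 / 2) ^ (k + 3) := by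
  have hSkS : S ≤ k * S := Nat.le_mul_of_pos_left S hk
  have hD : (1 : ℝ) ≤ D := by exact_mod_cast (Nat.one_le_pow 2 m hm).trans hmD
  set σ := log (N / S)
  set Λ := (M : ℝ) / D * m ^ 2 * (1 + log D)
  have hσ : 0 ≤ σ := log_nonneg <| (one_le_div (by positivity)).2 (by exact_mod_cast hSkS.trans hkS)
  have hΛ : 0 ≤ Λ := by have := log_nonneg hD; positivity
  have hSΛ : (D : ℝ) * (12 + 3 * Λ + 6 * σ) ≤ S := by
    convert h using 1
    simp only [Λ]
    field_simp
  have hfam : (#(smallColorSets M D m) : ℝ) ^ S ≤ exp (S * Λ) := by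
    rw [exp_nat_mul]
    gcongr
    exact card_smallColorSets_le hM hm hmD
  calc (N.choose (k * S) * N.choose S * #(smallColorSets M D m) ^ S
        * exp (-((2 * log 2 - 1) * m ^ 2 * (k * S) * S / D)) : ℝ)
      ≤ exp ((k * S : ℕ) * (1 + σ)) * exp (S * (1 + σ)) * exp (S * Λ)
        * exp (-((2 * log 2 - 1) * m ^ 2 * (k * S) * S / D)) := by
        gcongr
        · exact choose_le_exp hS hSkS hkS
        · exact choose_le_exp hS le_rfl (hSkS.trans hkS)
    _ = exp (k * S * (1 + σ) + S * (1 + σ) + S * Λ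
          - (2 * log 2 - 1) * m ^ 2 * (k * S) * S / D) := by
        simp only [← exp_add]
        push_cast
        ring_nf
    _ ≤ exp ((k + 3 : ℕ) * log (1 / 2)) := by
        gcongr
        rw [one_div, log_inv]
        push_cast
        linarith [union_bound_exponent_le (μ := m ^ 2) (by exact_mod_cast hk : (1 : ℝ) ≤ k)
          (one_le_pow₀ (by exact_mod_cast hm)) hσ hΛ hD hSΛ]
    _ = (1 / 2) ^ (k + 3) := by rw [exp_nat_mul, exp_log (by norm_num)]

open Classical in
theorem two_mul_card_not_colBalanced_lt (hM : 0 < M) (hS : 0 < S) (hD : 0 < D)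
    (h : 12 * (D : ℝ) + 3 * (1 + log D) * M * m ^ 2 + 6 * D * log (N / S) ≤ S) :
    2 * #{T : Fin N × Fin N → Fin M | ¬ ColBalanced N M S D m T}
      < Fintype.card (Fin N × Fin N → Fin M) := by
  have hΩ : 0 < Fintype.card (Fin N × Fin N → Fin M) := Fintype.card_pos_iff.2 ⟨fun _ => ⟨0, hM⟩⟩
  by_cases hdeg : N < S ∨ D ≤ 2 * m ^ 2 ∨ m = 0
  · have hall : ∀ T, ColBalanced N M S D m T := by
      rcases hdeg with hNS | hDm | rfl
      exacts [colBalanced_of_lt hNS, colBalanced_of_le hD hDm, colBalanced_zero hM hS hD]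
    simpa [hall] using hΩ
  push Not at hdeg
  obtain ⟨hSN, hDm, hm⟩ := hdeg
  have hgeom : ∑ k ∈ Icc 1 (N / S), (N.choose (k * S) * N.choose S * #(smallColorSets M D m) ^ S
      * exp (-((2 * log 2 - 1) * m ^ 2 * (k * S) * S / D)) : ℝ) ≤ 1 / 4 :=
    calc _ ≤ ∑ k ∈ Icc 1 (N / S), (1 / 8 : ℝ) * (1 / 2) ^ k := by
          refine sum_le_sum fun k hk => ?_
          rw [mem_Icc] at hk
          refine (choose_mul_choose_mul_pow_mul_exp_le hS hk.1 ((Nat.le_div_iff_mul_le hS).1 hk.2)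
            hM (Nat.one_le_iff_ne_zero.2 hm) (by omega) h).trans_eq ?_
          ring
      _ ≤ ∑ k ∈ range (N / S + 1), (1 / 8 : ℝ) * (1 / 2) ^ k :=
          sum_le_sum_of_subset_of_nonneg (fun k hk => by simp at hk ⊢; omega)
            fun _ _ _ => by positivity
      _ ≤ 1 / 4 := by
          rw [← mul_sum]
          linarith [sum_geometric_two_le (N / S + 1)]
  have hquarter : (#{T : Fin N × Fin N → Fin M | ¬ ColBalanced N M S D m T} : ℝ)
      ≤ Fintype.card (Fin N × Fin N → Fin M) * (1 / 4) :=
    (card_not_colBalanced_le hS).trans (mul_le_mul_of_nonneg_left hgeom (Nat.cast_nonneg _))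
  have hΩr : (0 : ℝ) < Fintype.card (Fin N × Fin N → Fin M) := by exact_mod_cast hΩ
  exact_mod_cast (by linarith : (2 * #{T : Fin N × Fin N → Fin M | ¬ ColBalanced N M S D m T} : ℝ)
      < Fintype.card (Fin N × Fin N → Fin M))

end UnionBound

/-- If `S ≥ 12D + 3(1 + ln D)·M·m² + 6D·ln(N/S)` (with `N = 2^n`, `M = 2^m`),
then there exists an `(S,D)`-rainbow balanced table `T : [N] × [N] → [M]`. -/
theorem stmt_15 (n m S D : ℕ) (hS : 0 < S) (hD : 0 < D)
    (h : 12 * (D : ℝ) + 3 * (1 + Real.log D) * (2 ^ m : ℝ) * m ^ 2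
        + 6 * D * Real.log ((2 ^ n : ℝ) / S) ≤ (S : ℝ)) :
    ∃ T : Fin (2 ^ n) × Fin (2 ^ n) → Fin (2 ^ m),
      RainbowBalanced (2 ^ n) (2 ^ m) S D m T := by
  classical
  have hswap : Function.Involutive
      fun T : Fin (2 ^ n) × Fin (2 ^ n) → Fin (2 ^ m) => T ∘ Prod.swap :=
    fun T => funext fun c => by simp
  obtain ⟨T, hT, hTswap⟩ := exists_and_apply_of_two_mul_card_lt hswap _
    (two_mul_card_not_colBalanced_lt (pow_pos two_pos m) hS hD (by push_cast; exact h))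
  exact ⟨T, (rainbowBalanced_iff T).2 ⟨hT, hTswap⟩⟩
end

section
/- In the setting of the Kolmogorov extractor proof: if the table T is (S,D)-rainbow balanced and for each column v the set A_v = {w ∈ {0,1}^m : C(w|v) < m − t} lies in 𝒜_D, then the number of 'bad' columns v — those for which the number of cells in B₁ × {v} colored with a color in A_v is at least 2|B₁'|/2^t — is less than S. -/
open scoped Classical

/-- In the extractor proof, suppose the table `T` satisfies the column part of
the `(S,D)`-rainbow balancing property, `B₁ ⊆ B₁'` with `|B₁'|` a positive multiple of `S`,
each column's color set `A_v` lies in `𝒜_D`, and the parameters satisfy `m²·2^t < D`. Call a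
column `v` bad if the number of cells in `B₁ × {v}` colored with a color of `A_v` is at
least `2|B₁'|/2^t`. Then the number of bad columns is less than `S`. -/
theorem stmt_18 (N M S D m t : ℕ) (hS : 0 < S) (hD : 0 < D)
    (T : Fin N × Fin N → Fin M)
    (hbal : ∀ B₁ B₂ : Finset (Fin N), (∃ k : ℕ, 0 < k ∧ B₁.card = k * S) → B₂.card = S →
      ∀ A : Fin N → Finset (Fin M), (∀ v ∈ B₂, InAD M D m (A v)) →
        (properCountCols T B₁ B₂ A : ℝ) ≤ 2 * m ^ 2 * B₁.card * B₂.card / D)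
    (B₁ B₁' : Finset (Fin N)) (hsub : B₁ ⊆ B₁')
    (hcard : ∃ k : ℕ, 0 < k ∧ B₁'.card = k * S)
    (A : Fin N → Finset (Fin M)) (hA : ∀ v : Fin N, InAD M D m (A v))
    (hparam : (m : ℝ) ^ 2 * 2 ^ t < (D : ℝ)) :
    (Finset.univ.filter (fun v : Fin N =>
        2 * (B₁'.card : ℝ) / 2 ^ t ≤
          ((B₁.filter (fun u => T (u, v) ∈ A v)).card : ℝ))).card < S := by
  by_contra h
  push_neg at h
  obtain ⟨B₂, hB₂sub, hB₂card⟩ := Finset.exists_subset_card_eq h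
  have hbad : ∀ v ∈ B₂, 2 * (B₁'.card : ℝ) / 2 ^ t ≤
      ((B₁.filter (fun u => T (u, v) ∈ A v)).card : ℝ) := by
    intro v hv
    have := hB₂sub hv
    simp only [Finset.mem_filter] at this
    exact this.2
  obtain ⟨k, hk, hkcard⟩ := hcard
  have hbound := hbal B₁' B₂ ⟨k, hk, hkcard⟩ hB₂card A (fun v _ => hA v)
  -- compute properCountCols as a sum over columns
  have hsum : (properCountCols T B₁' B₂ A : ℝ) =
      ∑ v ∈ B₂, ((B₁'.filter (fun u => T (u, v) ∈ A v)).card : ℝ) := by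
    unfold properCountCols
    rw [Finset.card_filter]
    push_cast
    rw [Finset.sum_product]
    rw [Finset.sum_comm]
    congr 1
    ext v
    rw [Finset.card_filter]
    push_cast
    rfl
  have hmono : ∀ v : Fin N, ((B₁.filter (fun u => T (u, v) ∈ A v)).card : ℝ) ≤
      ((B₁'.filter (fun u => T (u, v) ∈ A v)).card : ℝ) := by
    intro v
    exact_mod_cast Finset.card_le_card (Finset.filter_subset_filter _ hsub)
  have hlower : (S : ℝ) * (2 * (B₁'.card : ℝ) / 2 ^ t) ≤ (properCountCols T B₁' B₂ A : ℝ) := by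
    rw [hsum]
    calc (S : ℝ) * (2 * (B₁'.card : ℝ) / 2 ^ t)
        = ∑ _v ∈ B₂, (2 * (B₁'.card : ℝ) / 2 ^ t) := by
          rw [Finset.sum_const, hB₂card, nsmul_eq_mul]
      _ ≤ ∑ v ∈ B₂, ((B₁'.filter (fun u => T (u, v) ∈ A v)).card : ℝ) :=
          Finset.sum_le_sum (fun v hv => le_trans (hbad v hv) (hmono v))
  rw [hB₂card] at hbound
  have hx : (0 : ℝ) < (B₁'.card : ℝ) := by
    have : 0 < B₁'.card := by
      rw [hkcard]; exact Nat.mul_pos hk hS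
    exact_mod_cast this
  have hSpos : (0 : ℝ) < (S : ℝ) := by exact_mod_cast hS
  have hDpos : (0 : ℝ) < (D : ℝ) := by exact_mod_cast hD
  have h2t : (0 : ℝ) < (2 : ℝ) ^ t := by positivity
  have key : (S : ℝ) * (2 * (B₁'.card : ℝ) / 2 ^ t) ≤
      2 * m ^ 2 * (B₁'.card : ℝ) * S / D := le_trans hlower hbound
  rw [mul_div_assoc'] at key
  rw [div_le_div_iff₀ h2t hDpos] at key
  nlinarith [mul_pos hSpos hx, mul_pos (mul_pos hSpos hx) h2t]
end
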